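/- Let H : Matrix (Fin n) (Fin n) ℂ be symmetric and let v : Fin n → ℂ satisfy H.mulVec v = 0 with v i ≠ 0 for all i. Then for all i, j ∈ Fin n: (v j)² · det(H with row i and column i deleted) = (v i)² · det(H with row j and column j deleted). -/
import Mathlib

open Matrix

def deleteRowCol {n : ℕ} (H : Matrix (Fin n) (Fin n) ℂ) (i : Fin n) :
    Matrix {j : Fin n // j ≠ i} {j : Fin n // j ≠ i} ℂ :=
  H.submatrix Subtype.val Subtype.val

/-- If a nonzero kernel vector vanishes at `p`, then row `p` of the adjugate is zero. -/
lemma adj_row_zero {n : ℕ} (H : Matrix (Fin n) (Fin n) ℂ) (γ : Fin n → ℂ)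
    (hγ : H.mulVec γ = 0) (hne : γ ≠ 0) (p : Fin n) (hp : γ p = 0) (q : Fin n) :
    H.adjugate p q = 0 := by
  rw [Matrix.adjugate_apply, ← Matrix.exists_mulVec_eq_zero_iff]
  refine ⟨γ, hne, ?_⟩
  funext r
  by_cases hr : r = q
  · subst hr
    simp [Matrix.mulVec, dotProduct, Matrix.updateRow_apply, Pi.single_apply, hp]
  · have := congrFun hγ r
    simpa [Matrix.mulVec, dotProduct, Matrix.updateRow_apply, hr] using this

lemma key {n : ℕ} (H : Matrix (Fin n) (Fin n) ℂ) (v : Fin n → ℂ)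
    (hv : H.mulVec v = 0) (hvne : ∀ i, v i ≠ 0) (hdet : H.det = 0)
    (k l m : Fin n) : v k * H.adjugate m l = H.adjugate k l * v m := by
  have hHA : H * H.adjugate = 0 := by
    rw [Matrix.mul_adjugate, hdet, zero_smul]
  set α : Fin n → ℂ := fun c => v k * H.adjugate c l - H.adjugate k l * v c with hα
  have hαker : H.mulVec α = 0 := by
    funext r
    have h1 : ∑ c, H r c * H.adjugate c l = 0 := by
      have := congrFun (congrFun hHA r) l
      simpa [Matrix.mul_apply] using this
    have h2 : ∑ c, H r c * v c = 0 := by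
      have := congrFun hv r
      simpa [Matrix.mulVec, dotProduct] using this
    simp only [Matrix.mulVec, dotProduct, hα, Pi.zero_apply]
    simp only [mul_sub]
    rw [Finset.sum_sub_distrib]
    have e1 : ∑ c, H r c * (v k * H.adjugate c l) = v k * ∑ c, H r c * H.adjugate c l := by
      rw [Finset.mul_sum]; apply Finset.sum_congr rfl; intros; ring
    have e2 : ∑ c, H r c * (H.adjugate k l * v c) = H.adjugate k l * ∑ c, H r c * v c := by
      rw [Finset.mul_sum]; apply Finset.sum_congr rfl; intros; ring
    rw [e1, e2, h1, h2]; ring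
  have hαk : α k = 0 := by simp [hα]; ring
  by_cases h0 : α = 0
  · have := congrFun h0 m
    simp only [hα, Pi.zero_apply, sub_eq_zero] at this
    exact this
  · exfalso
    have hadj : ∀ p q, H.adjugate p q = 0 := by
      intro p q
      by_cases hp : α p = 0
      · exact adj_row_zero H α hαker h0 p hp q
      · set β : Fin n → ℂ := fun c => α p * v c - v p * α c with hβ
        have hβker : H.mulVec β = 0 := by
          have : β = α p • v - v p • α := by funext c; simp [hβ]
          rw [this, Matrix.mulVec_sub, Matrix.mulVec_smul, Matrix.mulVec_smul, hv, hαker,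
            smul_zero, smul_zero, sub_zero]
        have hβp : β p = 0 := by simp [hβ]; ring
        have hβne : β ≠ 0 := by
          intro h
          have := congrFun h k
          simp only [hβ, hαk, Pi.zero_apply, mul_zero, sub_zero] at this
          exact hp ((mul_eq_zero.mp this).resolve_right (hvne k))
        exact adj_row_zero H β hβker hβne p hβp q
    apply h0
    funext c
    simp [hα, hadj]

instance uniqueNotNe {n : ℕ} (i : Fin n) : Unique {j : Fin n // ¬ j ≠ i} :=
  ⟨⟨⟨i, by simp⟩⟩, by rintro ⟨j, hj⟩; simp at hj; simp [hj]⟩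

lemma adj_diag {n : ℕ} (H : Matrix (Fin n) (Fin n) ℂ) (i : Fin n) :
    H.adjugate i i = (deleteRowCol H i).det := by
  rw [Matrix.adjugate_apply]
  set B := H.updateRow i (Pi.single i 1) with hB
  rw [← Matrix.det_submatrix_equiv_self (Equiv.sumCompl (fun j : Fin n => j ≠ i)) B]
  have hblock : B.submatrix (Equiv.sumCompl (fun j : Fin n => j ≠ i)) (Equiv.sumCompl (fun j : Fin n => j ≠ i)) =
      Matrix.fromBlocks (deleteRowCol H i)
        (Matrix.of fun (x : {j : Fin n // j ≠ i}) (_ : {j : Fin n // ¬ j ≠ i}) => B x.val i)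
        0 1 := by
    ext x y
    cases x with
    | inl x =>
      cases y with
      | inl y =>
        simp [hB, deleteRowCol, Matrix.updateRow_apply, x.prop]
      | inr y =>
        have : y.val = i := by have := y.prop; simpa using this
        simp [this]
    | inr x =>
      have hx : x.val = i := by have := x.prop; simpa using this
      cases y with
      | inl y =>
        simp [hB, hx, Matrix.updateRow_apply, Pi.single_apply, (y.prop).symm, y.prop]
      | inr y =>
        have hy : y.val = i := by have := y.prop; simpa using this
        have hxy : x = y := Subtype.ext (hx.trans hy.symm)
        subst hxy
        simp [hB, hx, Matrix.updateRow_apply, Pi.single_apply, Matrix.one_apply]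
  rw [hblock, Matrix.det_fromBlocks_zero₂₁]
  simp

/-- For a symmetric complex matrix `H` with `H v = 0` and all `v i ≠ 0`, the
rescaled principal minors `det(H^i_i)/(v i)²` are independent of `i`. -/
theorem minor_ratio_independent (n : ℕ) (H : Matrix (Fin n) (Fin n) ℂ)
    (hsym : H.IsSymm) (v : Fin n → ℂ) (hv : H.mulVec v = 0)
    (hvne : ∀ i, v i ≠ 0) (i j : Fin n) :
    (v j) ^ 2 * (deleteRowCol H i).det = (v i) ^ 2 * (deleteRowCol H j).det := by
  have hdet : H.det = 0 := by
    by_contra h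
    have hu : IsUnit H.det := isUnit_iff_ne_zero.mpr h
    have : v = 0 := by
      have h1 : H⁻¹ *ᵥ (H *ᵥ v) = v := by
        rw [Matrix.mulVec_mulVec, Matrix.nonsing_inv_mul H hu, Matrix.one_mulVec]
      rw [hv, Matrix.mulVec_zero] at h1
      exact h1.symm
    exact hvne i (by rw [this]; rfl)
  have hadjsymm : H.adjugate j i = H.adjugate i j := by
    have := Matrix.adjugate_transpose H
    rw [hsym.eq] at this
    have := congrFun (congrFun this i) j
    simpa [Matrix.transpose_apply] using this
  have k1 : v i * H.adjugate j i = H.adjugate i i * v j :=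
    key H v hv hvne hdet i i j
  have k2 : v j * H.adjugate i j = H.adjugate j j * v i :=
    key H v hv hvne hdet j j i
  rw [← adj_diag, ← adj_diag]
  linear_combination (-(v j)) * k1 + (v i) * k2 + (v i * v j) * hadjsymm
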